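/- Let C and D be closed model categories and (S, U): C → D a Quillen equivalence. If X is a cofibrant object of C, then the induced Quillen adjunction (S̄, Ū): (X↓C) → (S(X)↓D) between the coslice categories is a Quillen equivalence. -/

import Mathlib

open CategoryTheory CategoryTheory.Limits

universe v u v' u'

/-- `f` is a retract of `g` in the arrow category. -/
def IsRetractOfArrow {C : Type u} [Category.{v} C] {A B A' B' : C}
    (f : A ⟶ B) (g : A' ⟶ B') : Prop :=
  ∃ (i : Arrow.mk f ⟶ Arrow.mk g) (r : Arrow.mk g ⟶ Arrow.mk f), i ≫ r = 𝟙 (Arrow.mk f)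

/-- A (closed) model structure on a category `C`, in the sense of Quillen: three classes of
morphisms (cofibrations, fibrations, weak equivalences) satisfying the two-out-of-three
axiom, closure under retracts, the lifting axioms and the factorization axioms. -/
structure ModelStruct (C : Type u) [Category.{v} C] : Type (max u v) where
  cof : MorphismProperty C
  fib : MorphismProperty C
  weq : MorphismProperty C
  weq_comp : ∀ {X Y Z : C} (f : X ⟶ Y) (g : Y ⟶ Z), weq f → weq g → weq (f ≫ g)
  weq_cancel_left : ∀ {X Y Z : C} (f : X ⟶ Y) (g : Y ⟶ Z), weq f → weq (f ≫ g) → weq g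
  weq_cancel_right : ∀ {X Y Z : C} (f : X ⟶ Y) (g : Y ⟶ Z), weq g → weq (f ≫ g) → weq f
  cof_retract : ∀ {A B A' B' : C} {f : A ⟶ B} {g : A' ⟶ B'},
    IsRetractOfArrow f g → cof g → cof f
  fib_retract : ∀ {A B A' B' : C} {f : A ⟶ B} {g : A' ⟶ B'},
    IsRetractOfArrow f g → fib g → fib f
  weq_retract : ∀ {A B A' B' : C} {f : A ⟶ B} {g : A' ⟶ B'},
    IsRetractOfArrow f g → weq g → weq f
  lifting_cof_trivFib : ∀ {A B X Y : C} (i : A ⟶ B) (p : X ⟶ Y),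
    cof i → fib p → weq p → HasLiftingProperty i p
  lifting_trivCof_fib : ∀ {A B X Y : C} (i : A ⟶ B) (p : X ⟶ Y),
    cof i → weq i → fib p → HasLiftingProperty i p
  factor_cof_trivFib : ∀ {X Y : C} (f : X ⟶ Y),
    ∃ (Z : C) (i : X ⟶ Z) (p : Z ⟶ Y), cof i ∧ fib p ∧ weq p ∧ i ≫ p = f
  factor_trivCof_fib : ∀ {X Y : C} (f : X ⟶ Y),
    ∃ (Z : C) (i : X ⟶ Z) (p : Z ⟶ Y), cof i ∧ weq i ∧ fib p ∧ i ≫ p = f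

variable {C : Type u} [Category.{v} C]

/-- An object is cofibrant if the unique map from the initial object to it is a cofibration. -/
def ModelStruct.Cofibrant [HasInitial C] (M : ModelStruct C) (A : C) : Prop :=
  M.cof (initial.to A)

/-- An object is fibrant if the unique map from it to the terminal object is a fibration. -/
def ModelStruct.Fibrant [HasTerminal C] (M : ModelStruct C) (A : C) : Prop :=
  M.fib (terminal.from A)

/-- The induced model structure on the coslice category `(X ↓ C)`: a morphism is a
cofibration, fibration or weak equivalence iff its underlying morphism in `C` is one. -/
def ModelStruct.under (M : ModelStruct C) (X : C) : ModelStruct (Under X) where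
  cof _ _ f := M.cof f.right
  fib _ _ f := M.fib f.right
  weq _ _ f := M.weq f.right
  weq_comp f g hf hg := by simpa using M.weq_comp f.right g.right hf hg
  weq_cancel_left f g hf hfg := M.weq_cancel_left f.right g.right hf (by simpa using hfg)
  weq_cancel_right f g hg hfg := M.weq_cancel_right f.right g.right hg (by simpa using hfg)
  cof_retract := fun ⟨i, r, hir⟩ hg => M.cof_retract
    ⟨(Under.forget X).mapArrow.map i, (Under.forget X).mapArrow.map r,
      ((Under.forget X).mapArrow.map_comp i r).symm.trans
        (by rw [hir, CategoryTheory.Functor.map_id]; rfl)⟩ hg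
  fib_retract := fun ⟨i, r, hir⟩ hg => M.fib_retract
    ⟨(Under.forget X).mapArrow.map i, (Under.forget X).mapArrow.map r,
      ((Under.forget X).mapArrow.map_comp i r).symm.trans
        (by rw [hir, CategoryTheory.Functor.map_id]; rfl)⟩ hg
  weq_retract := fun ⟨i, r, hir⟩ hg => M.weq_retract
    ⟨(Under.forget X).mapArrow.map i, (Under.forget X).mapArrow.map r,
      ((Under.forget X).mapArrow.map_comp i r).symm.trans
        (by rw [hir, CategoryTheory.Functor.map_id]; rfl)⟩ hg
  lifting_cof_trivFib i p hi hp hp' := by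
    constructor
    intro f g sq
    haveI := M.lifting_cof_trivFib i.right p.right hi hp hp'
    have sq' : CommSq f.right i.right p.right g.right :=
      ⟨by rw [← Under.comp_right, sq.w, Under.comp_right]⟩
    exact ⟨⟨⟨Under.homMk sq'.lift (by
        rw [← Under.w i, Category.assoc, sq'.fac_left, Under.w f]),
      by ext; exact sq'.fac_left, by ext; exact sq'.fac_right⟩⟩⟩
  lifting_trivCof_fib i p hi hi' hp := by
    constructor
    intro f g sq
    haveI := M.lifting_trivCof_fib i.right p.right hi hi' hp
    have sq' : CommSq f.right i.right p.right g.right :=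
      ⟨by rw [← Under.comp_right, sq.w, Under.comp_right]⟩
    exact ⟨⟨⟨Under.homMk sq'.lift (by
        rw [← Under.w i, Category.assoc, sq'.fac_left, Under.w f]),
      by ext; exact sq'.fac_left, by ext; exact sq'.fac_right⟩⟩⟩
  factor_cof_trivFib {A B} f := by
    obtain ⟨Z, i, p, hi, hp, hp', hfac⟩ := M.factor_cof_trivFib f.right
    exact ⟨Under.mk (A.hom ≫ i), Under.homMk i rfl,
      Under.homMk p (by show (A.hom ≫ i) ≫ p = B.hom; rw [Category.assoc, hfac, Under.w f]),
      hi, hp, hp', by ext; exact hfac⟩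
  factor_trivCof_fib {A B} f := by
    obtain ⟨Z, i, p, hi, hi', hp, hfac⟩ := M.factor_trivCof_fib f.right
    exact ⟨Under.mk (A.hom ≫ i), Under.homMk i rfl,
      Under.homMk p (by show (A.hom ≫ i) ≫ p = B.hom; rw [Category.assoc, hfac, Under.w f]),
      hi, hi', hp, by ext; exact hfac⟩

/-- The induced model structure on the slice category `(C ↓ X)`: a morphism is a
cofibration, fibration or weak equivalence iff its underlying morphism in `C` is one. -/
def ModelStruct.over (M : ModelStruct C) (X : C) : ModelStruct (Over X) where
  cof _ _ f := M.cof f.left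
  fib _ _ f := M.fib f.left
  weq _ _ f := M.weq f.left
  weq_comp f g hf hg := by simpa using M.weq_comp f.left g.left hf hg
  weq_cancel_left f g hf hfg := M.weq_cancel_left f.left g.left hf (by simpa using hfg)
  weq_cancel_right f g hg hfg := M.weq_cancel_right f.left g.left hg (by simpa using hfg)
  cof_retract := fun ⟨i, r, hir⟩ hg => M.cof_retract
    ⟨(Over.forget X).mapArrow.map i, (Over.forget X).mapArrow.map r,
      ((Over.forget X).mapArrow.map_comp i r).symm.trans
        (by rw [hir, CategoryTheory.Functor.map_id]; rfl)⟩ hg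
  fib_retract := fun ⟨i, r, hir⟩ hg => M.fib_retract
    ⟨(Over.forget X).mapArrow.map i, (Over.forget X).mapArrow.map r,
      ((Over.forget X).mapArrow.map_comp i r).symm.trans
        (by rw [hir, CategoryTheory.Functor.map_id]; rfl)⟩ hg
  weq_retract := fun ⟨i, r, hir⟩ hg => M.weq_retract
    ⟨(Over.forget X).mapArrow.map i, (Over.forget X).mapArrow.map r,
      ((Over.forget X).mapArrow.map_comp i r).symm.trans
        (by rw [hir, CategoryTheory.Functor.map_id]; rfl)⟩ hg
  lifting_cof_trivFib i p hi hp hp' := by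
    constructor
    intro f g sq
    haveI := M.lifting_cof_trivFib i.left p.left hi hp hp'
    have sq' : CommSq f.left i.left p.left g.left :=
      ⟨by rw [← Over.comp_left, sq.w, Over.comp_left]⟩
    exact ⟨⟨⟨Over.homMk sq'.lift (by
        rw [← Over.w p, ← Category.assoc, sq'.fac_right, Over.w g]),
      by ext; exact sq'.fac_left, by ext; exact sq'.fac_right⟩⟩⟩
  lifting_trivCof_fib i p hi hi' hp := by
    constructor
    intro f g sq
    haveI := M.lifting_trivCof_fib i.left p.left hi hi' hp
    have sq' : CommSq f.left i.left p.left g.left :=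
      ⟨by rw [← Over.comp_left, sq.w, Over.comp_left]⟩
    exact ⟨⟨⟨Over.homMk sq'.lift (by
        rw [← Over.w p, ← Category.assoc, sq'.fac_right, Over.w g]),
      by ext; exact sq'.fac_left, by ext; exact sq'.fac_right⟩⟩⟩
  factor_cof_trivFib {A B} f := by
    obtain ⟨Z, i, p, hi, hp, hp', hfac⟩ := M.factor_cof_trivFib f.left
    exact ⟨Over.mk (p ≫ B.hom), Over.homMk i (by show i ≫ (p ≫ B.hom) = A.hom; rw [← Category.assoc, hfac, Over.w f]),
      Over.homMk p rfl, hi, hp, hp', by ext; exact hfac⟩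
  factor_trivCof_fib {A B} f := by
    obtain ⟨Z, i, p, hi, hi', hp, hfac⟩ := M.factor_trivCof_fib f.left
    exact ⟨Over.mk (p ≫ B.hom), Over.homMk i (by show i ≫ (p ≫ B.hom) = A.hom; rw [← Category.assoc, hfac, Over.w f]),
      Over.homMk p rfl, hi, hi', hp, by ext; exact hfac⟩

noncomputable instance (X : C) : HasInitial (Under X) :=
  Under.mkIdInitial.hasInitial

noncomputable instance (X : C) : HasTerminal (Over X) :=
  Over.mkIdTerminal.hasTerminal

/-- The terminal object of `(X ↓ C)` is `X ⟶ *`. -/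
noncomputable def underMkTerminal [HasTerminal C] (X : C) :
    IsTerminal (Under.mk (terminal.from X)) :=
  IsTerminal.ofUniqueHom (fun u => Under.homMk (terminal.from u.right)
      (terminal.hom_ext _ _))
    (fun u m => by ext; exact terminal.hom_ext _ _)

noncomputable instance [HasTerminal C] (X : C) : HasTerminal (Under X) :=
  (underMkTerminal X).hasTerminal

/-- The initial object of `(C ↓ X)` is `∅ ⟶ X`. -/
noncomputable def overMkInitial [HasInitial C] (X : C) :
    IsInitial (Over.mk (initial.to X)) :=
  IsInitial.ofUniqueHom (fun u => Over.homMk (initial.to u.left)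
      (initial.hom_ext _ _))
    (fun u m => by ext; exact initial.hom_ext _ _)

noncomputable instance [HasInitial C] (X : C) : HasInitial (Over X) :=
  (overMkInitial X).hasInitial

/-- A Quillen adjunction between model categories: an adjoint pair whose left adjoint
preserves cofibrations and acyclic cofibrations. -/
structure QuillenAdjunction {C : Type u} [Category.{v} C] {D : Type u'} [Category.{v'} D]
    (M : ModelStruct C) (N : ModelStruct D) (F : C ⥤ D) (G : D ⥤ C) where
  adj : F ⊣ G
  map_cof : ∀ {A B : C} (f : A ⟶ B), M.cof f → N.cof (F.map f)
  map_trivCof_weq : ∀ {A B : C} (f : A ⟶ B), M.cof f → M.weq f → N.weq (F.map f)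

/-- A Quillen adjunction is a Quillen equivalence if for every cofibrant `A` and fibrant `B`,
a map `F A ⟶ B` is a weak equivalence iff its adjunct `A ⟶ G B` is. -/
def IsQuillenEquivalence {C : Type u} [Category.{v} C] {D : Type u'} [Category.{v'} D]
    [HasInitial C] [HasTerminal D]
    (M : ModelStruct C) (N : ModelStruct D) {F : C ⥤ D} {G : D ⥤ C} (adj : F ⊣ G) : Prop :=
  ∀ (A : C) (B : D), M.Cofibrant A → N.Fibrant B →
    ∀ f : F.obj A ⟶ B, N.weq f ↔ M.weq ((adj.homEquiv A B) f)

/-!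
The adjunction `S̄ ⊣ Ū` acts on underlying maps as `S ⊣ U`, and weak equivalences of coslices
are detected on underlying maps, so it suffices that cofibrant and fibrant objects of the coslices
have cofibrant and fibrant underlying objects. For fibrant objects this is immediate, the terminal
object of `(X ↓ C)` lying over that of `C`. A cofibrant `A : X ↓ C` is a cofibration `X ⟶ A`, and
`∅ ⟶ A` factors as `∅ ⟶ X ⟶ A`, a composite of cofibrations as `X` is cofibrant.
-/

lemma IsRetractOfArrow.of_retractArrow {A B A' B' : C} {f : A ⟶ B} {g : A' ⟶ B'}
    (h : RetractArrow f g) : IsRetractOfArrow f g :=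
  ⟨h.i, h.r, h.retract⟩

lemma IsRetractOfArrow.of_arrowIso {A B A' B' : C} {f : A ⟶ B} {g : A' ⟶ B'}
    (e : Arrow.mk f ≅ Arrow.mk g) : IsRetractOfArrow f g :=
  .of_retractArrow (Retract.ofIso e)

namespace ModelStruct

variable (M : ModelStruct C)

/-- The retract argument: `f ≫ g` lifts against the trivial fibration of its factorization,
so it is a retract of the cofibration there. -/
lemma cof_comp {A B Z : C} {f : A ⟶ B} {g : B ⟶ Z} (hf : M.cof f) (hg : M.cof g) :
    M.cof (f ≫ g) := by
  obtain ⟨W, i, p, hi, hp, hp', hfac⟩ := M.factor_cof_trivFib (f ≫ g)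
  have := M.lifting_cof_trivFib f p hf hp hp'
  have := M.lifting_cof_trivFib g p hg hp hp'
  exact M.cof_retract (.of_retractArrow (RetractArrow.ofLeftLiftingProperty hfac)) hi

lemma cof_hom_of_cofibrant_under {X : C} {A : Under X} (hA : (M.under X).Cofibrant A) :
    M.cof A.hom := by
  let e : Under.mk (𝟙 X) ≅ ⊥_ Under X := Under.mkIdInitial.uniqueUpToIso initialIsInitial
  let e' : Arrow.mk A.hom ≅ Arrow.mk (initial.to A).right :=
    Arrow.isoMk ((Under.forget X).mapIso e) (Iso.refl _)
      (by simpa using Under.w (e.hom ≫ initial.to A))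
  exact M.cof_retract (.of_arrowIso e') hA

lemma cofibrant_right_of_cofibrant_under [HasInitial C] {X : C} (hX : M.Cofibrant X)
    {A : Under X} (hA : (M.under X).Cofibrant A) : M.Cofibrant A.right := by
  rw [Cofibrant, initial.hom_ext (initial.to A.right) (initial.to X ≫ A.hom)]
  exact M.cof_comp hX (M.cof_hom_of_cofibrant_under hA)

lemma fibrant_right_of_fibrant_under [HasTerminal C] {X : C} {B : Under X}
    (hB : (M.under X).Fibrant B) : M.Fibrant B.right := by
  let e : ⊤_ Under X ≅ Under.mk (terminal.from X) :=
    terminalIsTerminal.uniqueUpToIso (underMkTerminal X)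
  let e' : Arrow.mk (terminal.from B).right ≅ Arrow.mk (terminal.from B.right) :=
    Arrow.isoMk (Iso.refl _) ((Under.forget X).mapIso e) (terminal.hom_ext _ _)
  exact M.fib_retract (.of_arrowIso e'.symm) hB

end ModelStruct

lemma Under.postAdjunctionLeft_homEquiv_right {D : Type u'} [Category.{v'} D] {S : C ⥤ D}
    {U : D ⥤ C} (adj : S ⊣ U) {X : C} {A : Under X} {B : Under (S.obj X)}
    (f : (Under.post S).obj A ⟶ B) :
    ((Under.postAdjunctionLeft adj).homEquiv A B f).right =
      adj.homEquiv A.right B.right f.right := by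
  rw [Adjunction.homEquiv_unit]
  exact (adj.homEquiv_unit _ _ _).symm

def QuillenAdjunction.under {D : Type u'} [Category.{v'} D] {M : ModelStruct C}
    {N : ModelStruct D} {S : C ⥤ D} {U : D ⥤ C} (Q : QuillenAdjunction M N S U) (X : C) :
    QuillenAdjunction (M.under X) (N.under (S.obj X))
      (Under.post S) (Under.post U ⋙ Under.map (Q.adj.unit.app X)) where
  adj := Under.postAdjunctionLeft Q.adj
  map_cof f hf := Q.map_cof f.right hf
  map_trivCof_weq f hf hf' := Q.map_trivCof_weq f.right hf hf'

theorem coslice_induced_quillen_equivalence_general {C : Type u} [Category.{v} C]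
    {D : Type u'} [Category.{v'} D]
    [HasColimits C] [HasLimits D]
    (M : ModelStruct C) (N : ModelStruct D) {S : C ⥤ D} {U : D ⥤ C}
    (Q : QuillenAdjunction M N S U) (hQ : IsQuillenEquivalence M N Q.adj)
    (X : C) (hX : M.Cofibrant X) :
    ∃ QA : QuillenAdjunction (M.under X) (N.under (S.obj X))
        (Under.post S) (Under.post U ⋙ Under.map (Q.adj.unit.app X)),
      IsQuillenEquivalence (M.under X) (N.under (S.obj X)) QA.adj := by
  refine ⟨Q.under X, fun A B hA hB f => ?_⟩
  have hweq := hQ A.right B.right (M.cofibrant_right_of_cofibrant_under hX hA)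
    (N.fibrant_right_of_fibrant_under hB) f.right
  rwa [← Under.postAdjunctionLeft_homEquiv_right] at hweq

/-- **Statement 11.** If `(S, U) : C → D` is a Quillen equivalence and `X` is a cofibrant object
of `C`, then the induced Quillen adjunction `(S̄, Ū) : (X ↓ C) → (S X ↓ D)` between the coslice
categories is a Quillen equivalence. -/
theorem coslice_induced_quillen_equivalence {C : Type u} [Category.{v} C]
    {D : Type u'} [Category.{v'} D]
    [HasLimits C] [HasColimits C] [HasLimits D] [HasColimits D]
    (M : ModelStruct C) (N : ModelStruct D) {S : C ⥤ D} {U : D ⥤ C}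
    (Q : QuillenAdjunction M N S U) (hQ : IsQuillenEquivalence M N Q.adj)
    (X : C) (hX : M.Cofibrant X) :
    ∃ QA : QuillenAdjunction (M.under X) (N.under (S.obj X))
        (Under.post S) (Under.post U ⋙ Under.map (Q.adj.unit.app X)),
      IsQuillenEquivalence (M.under X) (N.under (S.obj X)) QA.adj :=
  coslice_induced_quillen_equivalence_general M N Q hQ X hX
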